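/- arXiv:1004.0436 — 6 statements merged into one kernel-verified Lean document; each statement's English description precedes it below -/
import Mathlib

section
/- Let V be the n-dimensional vector space over F2. If f : F2^n → {0,1} equals the linear functional x ↦ ⟨x,s⟩ on every point of a coset H = {x : Ax = r} (for A an m×n matrix over F2 and r ∈ F2^m, H nonempty), and E is a set of ℓ standard basis vectors such that fixing the coordinates of some x0 ∈ H on E forces f to be constant, then s + v lies in the span of the vectors of E for some v in the row space of A. In particular ℓ ≥ min{|s+v| : v ∈ row space of A}, where |·| is Hamming weight. -/
/-!
If `y` lies in the kernel of `A` and vanishes on `E`, then `x0 + y ∈ H` agrees with `x0` on `E`,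
so the certificate gives `⟨x0 + y, s⟩ = ⟨x0, s⟩`, i.e. `⟨y, s⟩ = 0`. These `y` are exactly the
vectors orthogonal to the row space of `A` plus the span of the coordinate vectors of `E`, so by
double orthogonality `s = v + w` with `v` in the row space and `w` supported on `E`; then
`s - v = w` has Hamming weight at most `|E|`.
-/

open Matrix Submodule

theorem mem_of_forall_dotProduct_eq_zero {K ι : Type*} [Field K] [Fintype ι]
    {W : Submodule K (ι → K)} {s : ι → K}
    (h : ∀ y, (∀ w ∈ W, y ⬝ᵥ w = 0) → y ⬝ᵥ s = 0) : s ∈ W := by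
  classical
  refine (Subspace.forall_mem_dualAnnihilator_apply_eq_zero_iff W s).mp fun φ hφ => ?_
  obtain ⟨y, rfl⟩ := (dotProductEquiv K ι).surjective φ
  exact h y fun w hw => (mem_dualAnnihilator _).mp hφ w hw

theorem apply_eq_zero_of_mem_span_single_image {R ι : Type*} [Semiring R] [DecidableEq ι]
    {E : Set ι} {x : ι → R} (hx : x ∈ span R ((fun i => Pi.single i (1 : R)) '' E))
    {j : ι} (hj : j ∉ E) : x j = 0 := by
  suffices span R ((fun i => Pi.single i (1 : R)) '' E) ≤ pi Eᶜ fun _ => ⊥ from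
    (mem_bot R).mp (this hx j hj)
  rw [span_le]
  rintro _ ⟨i, hi, rfl⟩ k hk
  exact (mem_bot R).mpr (Pi.single_eq_of_ne (ne_of_mem_of_not_mem hi hk).symm _)

theorem hammingNorm_le_card_of_forall_notMem {ι : Type*} [Fintype ι] {β : ι → Type*}
    [∀ i, DecidableEq (β i)] [∀ i, Zero (β i)] {x : ∀ i, β i} {E : Finset ι}
    (hx : ∀ j ∉ E, x j = 0) : hammingNorm x ≤ E.card :=
  Finset.card_le_card fun j hj => by_contra fun hjE => (Finset.mem_filter.mp hj).2 (hx j hjE)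

theorem dotProduct_eq_zero_of_certificate {R m n : Type*} [CommRing R] [Fintype n]
    {f : (n → R) → R} {s : n → R} {A : Matrix m n R} {r : m → R}
    (hf : ∀ x, A *ᵥ x = r → f x = x ⬝ᵥ s) {x0 : n → R} (hx0 : A *ᵥ x0 = r) {E : Set n}
    (hcert : ∀ x', (∀ i ∈ E, x' i = x0 i) → f x' = f x0)
    {y : n → R} (hAy : A *ᵥ y = 0) (hyE : ∀ i ∈ E, y i = 0) : y ⬝ᵥ s = 0 := by
  have hx0y : A *ᵥ (x0 + y) = r := by rw [mulVec_add, hx0, hAy, add_zero]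
  have h := hcert (x0 + y) fun i hi => by simp [hyE i hi]
  rwa [hf _ hx0y, hf _ hx0, add_dotProduct, add_eq_left] at h

theorem stmt0_general {n m : ℕ} (f : (Fin n → ZMod 2) → ZMod 2) (s : Fin n → ZMod 2)
    (A : Matrix (Fin m) (Fin n) (ZMod 2)) (r : Fin m → ZMod 2)
    (H : Set (Fin n → ZMod 2)) (hH : H = {x | A.mulVec x = r})
    (hf : ∀ x ∈ H, f x = ∑ i, x i * s i)
    (x0 : Fin n → ZMod 2) (hx0 : x0 ∈ H)
    (E : Finset (Fin n)) (ℓ : ℕ) (hE : E.card = ℓ)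
    (hcert : ∀ x', (∀ i ∈ E, x' i = x0 i) → f x' = f x0) :
    ∃ v ∈ Submodule.span (ZMod 2) (Set.range fun i => A i),
      s + v ∈ Submodule.span (ZMod 2) ((fun i => Pi.single i (1 : ZMod 2)) '' (E : Set (Fin n))) ∧
        hammingNorm (s + v) ≤ ℓ := by
  subst hH
  set R := span (ZMod 2) (Set.range fun i => A i)
  set W := span (ZMod 2) ((fun i => Pi.single i (1 : ZMod 2)) '' (E : Set (Fin n)))
  have hs : s ∈ R ⊔ W := mem_of_forall_dotProduct_eq_zero fun y hy =>
    dotProduct_eq_zero_of_certificate hf hx0 hcert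
      (funext fun i => (dotProduct_comm _ _).trans (hy _ (mem_sup_left (subset_span ⟨i, rfl⟩))))
      fun i hi => by simpa using hy _ (mem_sup_right (subset_span ⟨i, hi, rfl⟩))
  obtain ⟨v, hv, w, hw, rfl⟩ := mem_sup.mp hs
  refine ⟨-v, R.neg_mem hv, ?_⟩
  rw [add_neg_cancel_comm]
  exact ⟨hw, hE ▸ hammingNorm_le_card_of_forall_notMem fun j hj =>
    apply_eq_zero_of_mem_span_single_image hw (Finset.mem_coe.not.mpr hj)⟩

/-- If `f` agrees with the linear functional `x ↦ ⟨x,s⟩` on a nonempty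
coset `H = {x : Ax = r}`, and fixing the coordinates of `x0 ∈ H` on a set `E` of `ℓ`
coordinates forces `f` constant, then `s + v` lies in the span of the standard basis
vectors indexed by `E` for some `v` in the row space of `A`; in particular
`ℓ ≥ min {|s+v| : v ∈ rowspace A}`. -/
theorem stmt0 {n m : ℕ} (f : (Fin n → ZMod 2) → ZMod 2) (s : Fin n → ZMod 2)
    (A : Matrix (Fin m) (Fin n) (ZMod 2)) (r : Fin m → ZMod 2)
    (H : Set (Fin n → ZMod 2)) (hH : H = {x | A.mulVec x = r}) (hne : H.Nonempty)
    (hf : ∀ x ∈ H, f x = ∑ i, x i * s i)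
    (x0 : Fin n → ZMod 2) (hx0 : x0 ∈ H)
    (E : Finset (Fin n)) (ℓ : ℕ) (hE : E.card = ℓ)
    (hcert : ∀ x', (∀ i ∈ E, x' i = x0 i) → f x' = f x0) :
    ∃ v ∈ Submodule.span (ZMod 2) (Set.range fun i => A i),
      s + v ∈ Submodule.span (ZMod 2) ((fun i => Pi.single i (1 : ZMod 2)) '' (E : Set (Fin n))) ∧
        hammingNorm (s + v) ≤ ℓ :=
  stmt0_general f s A r H hH hf x0 hx0 E ℓ hE hcert
end

section
/- Let V1, …, Vk be subspaces of F2^n, each of codimension d, such that no Vi is contained in the union of the others. Then k ≤ (3n)^d. -/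
open Module Submodule Finset

/-- If `V1, …, Vk` are subspaces of `F2^n`, each of codimension `d`
(i.e. dimension `n - d`), such that no `Vi` is contained in the union of the others,
then `k ≤ (3n)^d`. -/
theorem stmt4 {n d k : ℕ} (hd : d ≤ n)
    (V : Fin k → Submodule (ZMod 2) (Fin n → ZMod 2))
    (hdim : ∀ i, Module.finrank (ZMod 2) (V i) = n - d)
    (hsep : ∀ i, ∃ x ∈ V i, ∀ j, j ≠ i → x ∉ V j) :
    k ≤ (3 * n) ^ d := by
  classical
  rcases Nat.eq_zero_or_pos d with rfl | hd1
  · -- d = 0 : each V i = ⊤, so k ≤ 1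
    simp only [pow_zero]
    by_contra h
    push_neg at h
    have htop : ∀ i, V i = ⊤ := by
      intro i
      apply Submodule.eq_top_of_finrank_eq
      rw [hdim i, Module.finrank_pi, Fintype.card_fin]
      omega
    obtain ⟨y, hy, hyj⟩ := hsep ⟨0, by omega⟩
    refine hyj ⟨1, by omega⟩ (by simp [Fin.ext_iff]) ?_
    rw [htop]; trivial
  · have hn1 : 1 ≤ n := le_trans hd1 hd
    choose x hxV hxN using hsep
    have hq : ∀ i, finrank (ZMod 2) ((Fin n → ZMod 2) ⧸ V i) = d := by
      intro i
      have h1 := Submodule.finrank_quotient_add_finrank (V i)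
      rw [hdim i, Module.finrank_pi, Fintype.card_fin] at h1
      omega
    let b : ∀ i, Basis (Fin d) (ZMod 2) ((Fin n → ZMod 2) ⧸ V i) :=
      fun i => Module.finBasisOfFinrankEq _ _ (hq i)
    let ℓ : Fin k → Fin d → ((Fin n → ZMod 2) →ₗ[ZMod 2] ZMod 2) :=
      fun i t => (Finsupp.lapply t).comp ((b i).repr.toLinearMap.comp (V i).mkQ)
    have hker : ∀ i y, y ∈ V i ↔ ∀ t, ℓ i t y = 0 := by
      intro i y
      rw [← Submodule.Quotient.mk_eq_zero (V i)]
      rw [← (b i).repr.map_eq_zero_iff]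
      constructor
      · intro h t
        simp only [ℓ, LinearMap.comp_apply, LinearEquiv.coe_toLinearMap, Submodule.mkQ_apply,
          Finsupp.lapply_apply]
        rw [h]; simp
      · intro h
        ext t
        simpa only [ℓ, LinearMap.comp_apply, LinearEquiv.coe_toLinearMap, Submodule.mkQ_apply,
          Finsupp.lapply_apply, Finsupp.coe_zero, Pi.zero_apply] using h t
    -- vectors
    let w : Fin k → Option (Fin n) → ZMod 2 := fun j m => m.elim 1 (x j)
    let u : Fin k → Fin d → Option (Fin n) → ZMod 2 :=
      fun i t m => m.elim 1 (fun m' => ℓ i t (fun j' => if m' = j' then 1 else 0))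
    have hlin : ∀ i t j, 1 + ℓ i t (x j) = ∑ m : Option (Fin n), u i t m * w j m := by
      intro i t j
      rw [Fintype.sum_option]
      simp only [u, w, Option.elim, one_mul]
      congr 1
      conv_lhs => rw [pi_eq_sum_univ (x j)]
      rw [map_sum]
      refine Finset.sum_congr rfl fun m' _ => ?_
      rw [map_smul]
      simp [smul_eq_mul, mul_comm]
    let v : Option (Fin d → Option (Fin n)) → (Fin k → ZMod 2) :=
      fun o => o.elim (fun _ => 1) (fun f j => ∏ t, w j (f t))
    have hrow : ∀ i, (fun j => if x j ∈ V i then (0:ZMod 2) else 1) =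
        v none + ∑ f : Fin d → Option (Fin n), (∏ t, u i t (f t)) • v (some f) := by
      intro i
      funext j
      have h1 : (if x j ∈ V i then (0:ZMod 2) else 1) = 1 + ∏ t, (1 + ℓ i t (x j)) := by
        by_cases h : x j ∈ V i
        · have h2 := (hker i (x j)).1 h
          simp only [h, if_true]
          rw [Finset.prod_congr rfl (fun t _ => by rw [h2 t, add_zero])]
          rw [Finset.prod_const_one]
          decide
        · obtain ⟨t, ht⟩ : ∃ t, ℓ i t (x j) ≠ 0 := by
            by_contra hc; push_neg at hc; exact h ((hker i _).2 hc)
          have hz : ∀ z : ZMod 2, z = 0 ∨ z = 1 := by decide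
          have h3 : (1 : ZMod 2) + ℓ i t (x j) = 0 := by
            rcases hz (ℓ i t (x j)) with h' | h'
            · exact absurd h' ht
            · rw [h']; decide
          rw [Finset.prod_eq_zero (Finset.mem_univ t) h3]
          simp [h]
      rw [h1]
      have h4 : ∏ t, (1 + ℓ i t (x j)) = ∑ f : Fin d → Option (Fin n),
          (∏ t, u i t (f t)) * (∏ t, w j (f t)) := by
        calc ∏ t, (1 + ℓ i t (x j)) = ∏ t, ∑ m : Option (Fin n), u i t m * w j m := by
              exact Finset.prod_congr rfl fun t _ => hlin i t j
          _ = ∑ f ∈ Fintype.piFinset (fun _ : Fin d => (univ : Finset (Option (Fin n)))),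
                ∏ t, u i t (f t) * w j (f t) := Finset.prod_univ_sum _ _
          _ = ∑ f : Fin d → Option (Fin n), (∏ t, u i t (f t)) * (∏ t, w j (f t)) := by
              rw [Fintype.piFinset_univ]
              exact Finset.sum_congr rfl fun f _ => Finset.prod_mul_distrib
      rw [h4]
      simp only [Pi.add_apply, Finset.sum_apply, Pi.smul_apply, smul_eq_mul, v, Option.elim]
    set W := Submodule.span (ZMod 2) (Set.range v) with hW
    have hmem : ∀ i, (fun j => if x j ∈ V i then (0:ZMod 2) else 1) ∈ W := by
      intro i
      rw [hrow i]
      exact add_mem (subset_span ⟨none, rfl⟩)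
        (Submodule.sum_mem _ fun f _ => Submodule.smul_mem _ _ (subset_span ⟨some f, rfl⟩))
    have hone : (fun _ : Fin k => (1:ZMod 2)) ∈ W := subset_span ⟨none, rfl⟩
    have hsingle : ∀ p : Fin k, (fun j => if p = j then (1:ZMod 2) else 0) ∈ W := by
      intro p
      have h5 := add_mem (hmem p) hone
      have h6 : (fun j => if x j ∈ V p then (0:ZMod 2) else 1) + (fun _ => 1) =
          (fun j => if p = j then (1:ZMod 2) else 0) := by
        funext j
        simp only [Pi.add_apply]
        by_cases h : j = p
        · subst h
          rw [if_pos (hxV j), if_pos rfl]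
          decide
        · have hnm : x j ∉ V p := hxN j p (Ne.symm h)
          rw [if_neg hnm, if_neg (Ne.symm h)]
          decide
      rwa [h6] at h5
    have htop : W = ⊤ := by
      rw [eq_top_iff]
      intro y _
      rw [pi_eq_sum_univ y]
      exact Submodule.sum_mem _ fun p _ => Submodule.smul_mem _ _ (hsingle p)
    have hk : k = finrank (ZMod 2) W := by
      rw [htop, finrank_top, Module.finrank_pi, Fintype.card_fin]
    have hle : finrank (ZMod 2) W ≤ Fintype.card (Option (Fin d → Option (Fin n))) :=
      finrank_range_le_card v
    rw [Fintype.card_option, Fintype.card_fun, Fintype.card_option, Fintype.card_fin,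
      Fintype.card_fin] at hle
    have harith : (n + 1) ^ d + 1 ≤ (3 * n) ^ d := by
      calc (n + 1) ^ d + 1 = (n + 1) ^ d + 1 ^ d := by rw [one_pow]
        _ ≤ (n + 1 + 1) ^ d := pow_add_pow_le (Nat.zero_le _) (Nat.zero_le _) (by omega)
        _ ≤ (3 * n) ^ d := Nat.pow_le_pow_left (by omega) d
    omega
end

section
/- For any non-constant Boolean function f : F2^n → {0,1}, the parity decision tree complexity satisfies D⊕(f) ≤ C⊕⁰(f)·C⊕¹(f), where C⊕ᵇ(f) is the maximum over x with f(x)=b of the minimum codimension of a coset containing x on which f is constantly b. -/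
/-- The coset `b + V` of `F2^n`. -/
def coset {n : ℕ} (b : Fin n → ZMod 2) (V : Submodule (ZMod 2) (Fin n → ZMod 2)) :
    Set (Fin n → ZMod 2) := {y | y - b ∈ V}

/-- Minimum codimension of a coset containing `x` on which `f` is constantly `v`. -/
noncomputable def pccbAt {n : ℕ} (f : (Fin n → ZMod 2) → ZMod 2)
    (x : Fin n → ZMod 2) (v : ZMod 2) : ℕ :=
  sInf {c | ∃ b V, x ∈ coset b V ∧ (∀ y ∈ coset b V, f y = v) ∧
    c = n - Module.finrank (ZMod 2) V}

/-- `C⊕ᵛ(f)`: the maximum over `x` with `f x = v` of the minimum size of a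
`v`-parity certificate for `x`. -/
noncomputable def pccb {n : ℕ} (f : (Fin n → ZMod 2) → ZMod 2) (v : ZMod 2) : ℕ :=
  sSup {c | ∃ x, f x = v ∧ c = pccbAt f x v}

/-- A parity decision tree. -/
inductive PTree (n : ℕ) where
  | leaf (b : ZMod 2)
  | node (c : Fin n → ZMod 2) (t0 t1 : PTree n)

/-- Evaluation of a parity decision tree on input `x`. -/
def PTree.eval {n : ℕ} : PTree n → (Fin n → ZMod 2) → ZMod 2
  | .leaf b, _ => b
  | .node c t0 t1, x => if (∑ i, x i * c i) = 0 then t0.eval x else t1.eval x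

/-- Depth of a parity decision tree. -/
def PTree.depth {n : ℕ} : PTree n → ℕ
  | .leaf _ => 0
  | .node _ t0 t1 => max t0.depth t1.depth + 1

/-- Parity decision tree complexity. -/
noncomputable def Dplus {n : ℕ} (f : (Fin n → ZMod 2) → ZMod 2) : ℕ :=
  sInf {d | ∃ T : PTree n, T.depth ≤ d ∧ ∀ x, T.eval x = f x}

namespace Stmt10Aux

variable {n : ℕ}

abbrev Vec (n : ℕ) := Fin n → ZMod 2

lemma zmod2 : ∀ z : ZMod 2, z = 0 ∨ z = 1 := by decide

lemma mem_coset_self (a : Vec n) (V : Submodule (ZMod 2) (Vec n)) : a ∈ coset a V := by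
  simp [coset]

lemma sub_mem_of_mem {V : Submodule (ZMod 2) (Vec n)} {a y z : Vec n}
    (hy : y ∈ coset a V) (hz : z ∈ coset a V) : z - y ∈ V := by
  have := V.sub_mem hz hy
  simpa [coset, sub_sub_sub_cancel_right] using this

lemma coset_subset {W V : Submodule (ZMod 2) (Vec n)} (hWV : W ≤ V) {a y : Vec n}
    (hy : y ∈ coset a V) : coset y W ⊆ coset a V := by
  intro z hz
  have h1 : z - y ∈ V := hWV hz
  have := V.add_mem h1 hy
  simpa [coset, sub_add_sub_cancel] using this

lemma coset_eq {V : Submodule (ZMod 2) (Vec n)} {a y : Vec n} (hy : y ∈ coset a V) :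
    coset y V = coset a V := by
  ext z
  constructor
  · intro hz; exact coset_subset le_rfl hy hz
  · intro hz; exact sub_mem_of_mem hy hz

lemma ip_eq (φ : Module.Dual (ZMod 2) (Vec n)) (x : Vec n) :
    (∑ i, x i * φ ((Pi.single i 1 : Vec n))) = φ x := by
  conv_rhs => rw [← Finset.univ_sum_single x]
  rw [map_sum]
  refine Finset.sum_congr rfl fun i _ => ?_
  have : (Pi.single i (x i) : Vec n) = (x i) • (Pi.single i 1 : Vec n) := by
    rw [← Pi.single_smul' i (x i) (1 : ZMod 2)]; simp
  rw [this, map_smul, smul_eq_mul]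

end Stmt10Aux

namespace Stmt10Aux

open Module

lemma inner {n : ℕ} (f : Vec n → ZMod 2) (U : Submodule (ZMod 2) (Vec n)) (D : ℕ) :
    ∀ m (V : Submodule (ZMod 2) (Vec n)) (a : Vec n), U ≤ V →
    finrank (ZMod 2) V ≤ finrank (ZMod 2) U + m →
    (∀ a' ∈ coset a V, ∃ T : PTree n, T.depth ≤ D ∧ ∀ x ∈ coset a' U, T.eval x = f x) →
    ∃ T : PTree n, T.depth ≤ m + D ∧ ∀ x ∈ coset a V, T.eval x = f x := by
  intro m
  induction m with
  | zero =>
    intro V a hUV hrank Hend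
    have hVU : U = V := Submodule.eq_of_le_of_finrank_le hUV (by omega)
    obtain ⟨T, hd, hc⟩ := Hend a (mem_coset_self a V)
    exact ⟨T, by omega, fun x hx => hc x (by rw [hVU]; exact hx)⟩
  | succ m ih =>
    intro V a hUV hrank Hend
    by_cases hVU : V ≤ U
    · have hVU' : U = V := le_antisymm hUV hVU
      obtain ⟨T, hd, hc⟩ := Hend a (mem_coset_self a V)
      exact ⟨T, by omega, fun x hx => hc x (by rw [hVU']; exact hx)⟩
    · obtain ⟨v, hvV, hvU⟩ := SetLike.not_le_iff_exists.mp hVU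
      obtain ⟨φ, hφv, hφU⟩ := Submodule.exists_dual_map_eq_bot_of_notMem hvU inferInstance
      have hφU' : ∀ u ∈ U, φ u = 0 := by
        intro u hu
        have : φ u ∈ U.map φ := ⟨u, hu, rfl⟩
        rw [hφU] at this
        simpa using this
      have key : ∀ x : Vec n, (∑ i, x i * φ (Pi.single i 1 : Vec n)) = φ x := ip_eq φ
      set V₁ := V ⊓ LinearMap.ker φ with hV₁def
      have hUV₁ : U ≤ V₁ := le_inf hUV (fun u hu => hφU' u hu)
      have hV₁V : V₁ < V := lt_of_le_of_ne inf_le_left (by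
        intro h
        have hv1 : v ∈ V₁ := h.symm ▸ hvV
        exact hφv (by simpa using hV₁def ▸ hv1 |>.2))
      have hrank1 : finrank (ZMod 2) V₁ ≤ finrank (ZMod 2) U + m := by
        have := Submodule.finrank_lt_finrank_of_lt hV₁V
        omega
      have hφv1 : φ v = 1 := (zmod2 (φ v)).resolve_left hφv
      have havV : a + v ∈ coset a V := by simpa [coset] using hvV
      obtain ⟨a₀, a₁, ha₀, ha₁, hφa₀, hφa₁⟩ :
          ∃ a₀ a₁ : Vec n, a₀ ∈ coset a V ∧ a₁ ∈ coset a V ∧ φ a₀ = 0 ∧ φ a₁ = 1 := by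
        rcases zmod2 (φ a) with h | h
        · exact ⟨a, a + v, mem_coset_self a V, havV, h, by rw [map_add, h, hφv1, zero_add]⟩
        · refine ⟨a + v, a, havV, mem_coset_self a V, by rw [map_add, h, hφv1]; decide, h⟩
      have hbr : ∀ (b : Vec n) (t : ZMod 2), b ∈ coset a V → φ b = t →
          ∀ x ∈ coset a V, φ x = t → x ∈ coset b V₁ := by
        intro b t hb hφb x hx hφx
        have hker : x - b ∈ LinearMap.ker φ := by
          rw [LinearMap.mem_ker, map_sub, hφb, hφx, sub_self]
        show x - b ∈ V ⊓ LinearMap.ker φ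
        exact Submodule.mem_inf.mpr ⟨sub_mem_of_mem hb hx, hker⟩
      obtain ⟨T₀, hd₀, hc₀⟩ := ih V₁ a₀ hUV₁ hrank1
        (fun a' ha' => Hend a' (coset_subset inf_le_left ha₀ ha'))
      obtain ⟨T₁, hd₁, hc₁⟩ := ih V₁ a₁ hUV₁ hrank1
        (fun a' ha' => Hend a' (coset_subset inf_le_left ha₁ ha'))
      refine ⟨.node (fun i => φ (Pi.single i 1 : Vec n)) T₀ T₁, ?_, ?_⟩
      · simp only [PTree.depth]
        omega
      · intro x hx
        show (if (∑ i, x i * φ (Pi.single i 1 : Vec n)) = 0 then T₀.eval x else T₁.eval x) = f x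
        rw [key x]
        by_cases hx0 : φ x = 0
        · rw [if_pos hx0]
          exact hc₀ x (hbr a₀ 0 ha₀ hφa₀ x hx hx0)
        · rw [if_neg hx0]
          have hx1 : φ x = 1 := (zmod2 (φ x)).resolve_left hx0
          exact hc₁ x (hbr a₁ 1 ha₁ hφa₁ x hx hx1)

lemma outer {n : ℕ} (f : Vec n → ZMod 2) (c1 : ℕ)
    (Hglob : ∀ s, f s = 1 → ∃ V1 : Submodule (ZMod 2) (Vec n),
      (∀ y ∈ coset s V1, f y = 1) ∧ n ≤ finrank (ZMod 2) V1 + c1) :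
    ∀ k (V : Submodule (ZMod 2) (Vec n)) (a : Vec n),
    (∀ y ∈ coset a V, f y = 0 → ∃ W ≤ V, (∀ z ∈ coset y W, f z = 0) ∧
      finrank (ZMod 2) V ≤ finrank (ZMod 2) W + k) →
    ∃ T : PTree n, T.depth ≤ k * c1 ∧ ∀ x ∈ coset a V, T.eval x = f x := by
  intro k
  induction k with
  | zero =>
    intro V a H0
    by_cases h1 : ∀ y ∈ coset a V, f y = 1
    · exact ⟨.leaf 1, by simp [PTree.depth], fun x hx => (h1 x hx).symm⟩
    · push_neg at h1
      obtain ⟨y, hy, hfy⟩ := h1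
      have hfy0 : f y = 0 := (zmod2 (f y)).resolve_right hfy
      obtain ⟨W, hWV, hW0, hrankW⟩ := H0 y hy hfy0
      have hWV' : W = V := Submodule.eq_of_le_of_finrank_le hWV (by omega)
      refine ⟨.leaf 0, by simp [PTree.depth], fun x hx => ?_⟩
      have : x ∈ coset y W := by
        rw [hWV', coset_eq hy]
        exact hx
      exact (hW0 x this).symm
  | succ k ih =>
    intro V a H0
    by_cases h1 : ∃ s ∈ coset a V, f s = 1
    · obtain ⟨s, hs, hfs⟩ := h1
      obtain ⟨V1, hV1, hV1rank⟩ := Hglob s hfs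
      set U := V ⊓ V1 with hUdef
      have hUV : U ≤ V := inf_le_left
      have hfU : ∀ z ∈ coset s U, f z = 1 := fun z hz =>
        hV1 z (coset_subset inf_le_right (mem_coset_self s V1) hz)
      have hrankU : finrank (ZMod 2) V ≤ finrank (ZMod 2) U + c1 := by
        have h := Submodule.finrank_sup_add_finrank_inf_eq V V1
        have h2 : finrank (ZMod 2) ↥(V ⊔ V1) ≤ n := by
          have := Submodule.finrank_le (V ⊔ V1)
          rwa [Module.finrank_fin_fun] at this
        have h' : finrank (ZMod 2) ↥U = finrank (ZMod 2) ↥(V ⊓ V1) := by rw [hUdef]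
        omega
      have Hend : ∀ a' ∈ coset a V, ∃ T : PTree n, T.depth ≤ k * c1 ∧
          ∀ x ∈ coset a' U, T.eval x = f x := by
        intro a' ha'
        by_cases hsU : s ∈ coset a' U
        · refine ⟨.leaf 1, by simp [PTree.depth], fun x hx => ?_⟩
          have : x ∈ coset s U := by rwa [coset_eq hsU]
          exact (hfU x this).symm
        · apply ih U a'
          intro y hy hfy0
          have hyV : y ∈ coset a V := coset_subset hUV ha' hy
          obtain ⟨W₀, hW₀V, hW₀0, hW₀rank⟩ := H0 y hyV hfy0
          have hsub : W₀ ⊔ U ≤ V := sup_le hW₀V hUV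
          have hne : W₀ ⊔ U ≠ V := by
            intro hEq
            have hsy : s - y ∈ W₀ ⊔ U := by rw [hEq]; exact sub_mem_of_mem hyV hs
            obtain ⟨w, hw, u, hu, hwu⟩ := Submodule.mem_sup.mp hsy
            have hz0 : f (y + w) = 0 := hW₀0 _ (by simpa [coset] using hw)
            have hz1 : f (y + w) = 1 := by
              apply hfU
              show y + w - s ∈ U
              have heq : y + w - s = -u := by
                have : s - y = w + u := hwu.symm
                rw [sub_eq_iff_eq_add] at this
                rw [this]; ring
              rw [heq]
              exact U.neg_mem hu
            rw [hz0] at hz1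
            exact (by decide : (0 : ZMod 2) ≠ 1) hz1
          have hlt : W₀ ⊔ U < V := lt_of_le_of_ne hsub hne
          have h3 := Submodule.finrank_lt_finrank_of_lt hlt
          have h4 := Submodule.finrank_sup_add_finrank_inf_eq W₀ U
          refine ⟨W₀ ⊓ U, inf_le_right, fun z hz =>
            hW₀0 z (coset_subset inf_le_left (mem_coset_self y W₀) hz), by omega⟩
      obtain ⟨T, hdT, hcT⟩ := inner f U (k * c1) c1 V a hUV hrankU Hend
      refine ⟨T, ?_, hcT⟩
      rw [Nat.succ_mul]
      omega
    · push_neg at h1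
      refine ⟨.leaf 0, by simp [PTree.depth], fun x hx => ?_⟩
      exact ((zmod2 (f x)).resolve_right (h1 x hx)).symm

lemma cert {n : ℕ} (f : Vec n → ZMod 2) (x : Vec n) (v : ZMod 2) (hx : f x = v) :
    ∃ V1 : Submodule (ZMod 2) (Vec n),
      (∀ y ∈ coset x V1, f y = v) ∧ n ≤ finrank (ZMod 2) V1 + pccb f v := by
  have hbotmem : ∀ x' : Vec n, f x' = v → (n : ℕ) ∈
      {c | ∃ b V, x' ∈ coset b V ∧ (∀ y ∈ coset b V, f y = v) ∧
        c = n - Module.finrank (ZMod 2) V} := by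
    intro x' hx'
    refine ⟨x', ⊥, mem_coset_self x' ⊥, fun y hy => ?_, by simp⟩
    have : y = x' := by
      have : y - x' ∈ (⊥ : Submodule (ZMod 2) (Vec n)) := hy
      rw [Submodule.mem_bot] at this
      exact sub_eq_zero.mp this
    rw [this]; exact hx'
  have hAtle : ∀ x' : Vec n, f x' = v → pccbAt f x' v ≤ n :=
    fun x' hx' => Nat.sInf_le (hbotmem x' hx')
  have hne : {c | ∃ b V, x ∈ coset b V ∧ (∀ y ∈ coset b V, f y = v) ∧
      c = n - Module.finrank (ZMod 2) V}.Nonempty := ⟨n, hbotmem x hx⟩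
  have hmem := Nat.sInf_mem hne
  obtain ⟨b, V, hxbV, hconst, hc⟩ := hmem
  have hle : pccbAt f x v ≤ pccb f v := by
    apply le_csSup
    · refine ⟨n, fun c hc' => ?_⟩
      obtain ⟨x', hx', rfl⟩ := hc'
      exact hAtle x' hx'
    · exact ⟨x, hx, rfl⟩
  have hAt : pccbAt f x v = n - finrank (ZMod 2) V := hc
  have hfr : finrank (ZMod 2) V ≤ n := by
    have := Submodule.finrank_le V
    rwa [Module.finrank_fin_fun] at this
  have h5 : n - Module.finrank (ZMod 2) V ≤ pccb f v := hAt ▸ hle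
  refine ⟨V, fun y hy => hconst y ?_, ?_⟩
  · rwa [coset_eq hxbV] at hy
  · calc n = finrank (ZMod 2) V + (n - finrank (ZMod 2) V) := (Nat.add_sub_cancel' hfr).symm
      _ ≤ finrank (ZMod 2) V + pccb f v := Nat.add_le_add_left h5 _

end Stmt10Aux

/-- for any non-constant `f`, `D⊕(f) ≤ C⊕⁰(f) · C⊕¹(f)`. -/
theorem stmt10 {n : ℕ} (f : (Fin n → ZMod 2) → ZMod 2)
    (hnc : ∃ x y, f x ≠ f y) :
    Dplus f ≤ pccb f 0 * pccb f 1 := by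
  open Stmt10Aux in
  have H0 : ∀ y ∈ coset (0 : Fin n → ZMod 2) (⊤ : Submodule (ZMod 2) (Fin n → ZMod 2)),
      f y = 0 → ∃ W ≤ (⊤ : Submodule (ZMod 2) (Fin n → ZMod 2)),
      (∀ z ∈ coset y W, f z = 0) ∧
      Module.finrank (ZMod 2) (⊤ : Submodule (ZMod 2) (Fin n → ZMod 2)) ≤
        Module.finrank (ZMod 2) W + pccb f 0 := by
    intro y _ hy0
    obtain ⟨V1, h1, h2⟩ := Stmt10Aux.cert f y 0 hy0
    refine ⟨V1, le_top, h1, ?_⟩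
    rw [finrank_top, Module.finrank_fin_fun]
    exact h2
  obtain ⟨T, hd, hc⟩ := Stmt10Aux.outer f (pccb f 1)
    (fun s hs => Stmt10Aux.cert f s 1 hs) (pccb f 0) ⊤ 0 H0
  exact Nat.sInf_le ⟨T, hd, fun x => hc x (by trivial)⟩
end

section
/- Let f : F2^n → {0,1} with f(0) = 0 and let S1, …, Sb be pairwise disjoint sensitive blocks achieving the block sensitivity b = bs(f,0) at 0. Then the subspace S = {x : xᵢ = 0 for all i ∈ S1 ∪ … ∪ Sb} is a 0-certificate: f(x) = 0 for all x ∈ S. Consequently C(f,0) ≤ |S1| + … + |Sb|. -/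
/-- Flip the coordinates of `y` belonging to the block `S`. -/
def flipSet {n : ℕ} (y : Fin n → ZMod 2) (S : Finset (Fin n)) : Fin n → ZMod 2 :=
  fun i => if i ∈ S then y i + 1 else y i

/-- Ordinary certificate complexity of `g` at `y`. -/
noncomputable def certAt {n : ℕ} (g : (Fin n → ZMod 2) → ZMod 2) (y : Fin n → ZMod 2) : ℕ :=
  sInf {c | ∃ E : Finset (Fin n),
    (∀ y', (∀ i ∈ E, y' i = y i) → g y' = g y) ∧ c = E.card}

/-- if `S1, …, Sb` are pairwise disjoint sensitive blocks of `f` at `0`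
achieving the block sensitivity `b = bs(f,0)` (maximality is expressed by saying that
any pairwise disjoint family of sensitive blocks has at most `b` members), then
`f ≡ 0` on the subspace `{x : xᵢ = 0 for all i ∈ S1 ∪ … ∪ Sb}`, and consequently
`C(f,0) ≤ |S1| + … + |Sb|`. -/
theorem stmt15 {n b : ℕ} (f : (Fin n → ZMod 2) → ZMod 2) (hf0 : f 0 = 0)
    (S : Fin b → Finset (Fin n))
    (hne : ∀ i, (S i).Nonempty)
    (hdisj : Pairwise fun i j => Disjoint (S i) (S j))
    (hsens : ∀ i, f (flipSet 0 (S i)) ≠ f 0)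
    (hmax : ∀ (k : ℕ) (T : Fin k → Finset (Fin n)), (∀ i, (T i).Nonempty) →
      (Pairwise fun i j => Disjoint (T i) (T j)) →
      (∀ i, f (flipSet 0 (T i)) ≠ f 0) → k ≤ b) :
    (∀ x : Fin n → ZMod 2, (∀ j, (∃ i, j ∈ S i) → x j = 0) → f x = 0) ∧
      certAt f 0 ≤ ∑ i, (S i).card := by
  have htwo : ∀ a : ZMod 2, a ≠ 0 → a = 1 := by decide
  have key : ∀ x : Fin n → ZMod 2, (∀ j, (∃ i, j ∈ S i) → x j = 0) → f x = 0 := by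
    intro x hx
    by_contra hfx
    set T : Finset (Fin n) := Finset.univ.filter (fun j => x j ≠ 0) with hT
    have hxeq : x = flipSet 0 T := by
      funext j
      simp only [flipSet, hT, Finset.mem_filter, Finset.mem_univ, true_and, Pi.zero_apply,
        zero_add]
      by_cases h : x j = 0
      · simp [h]
      · simp [h, htwo _ h]
    have hTne : T.Nonempty := by
      rw [Finset.filter_nonempty_iff]
      by_contra hcon
      push_neg at hcon
      apply hfx
      have hx0 : x = 0 := by
        funext j
        exact hcon j (Finset.mem_univ j)
      rw [hx0, hf0]
    have hTdisj : ∀ i, Disjoint (S i) T := by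
      intro i
      rw [Finset.disjoint_right]
      intro j hjT hjS
      rw [hT, Finset.mem_filter] at hjT
      exact hjT.2 (hx j ⟨i, hjS⟩)
    set T' : Fin (b + 1) → Finset (Fin n) := Fin.snoc S T with hT'
    have h1 : ∀ i, (T' i).Nonempty := by
      intro i
      induction i using Fin.lastCases with
      | last => simpa [hT'] using hTne
      | cast i' => simpa [hT'] using hne i'
    have h2 : Pairwise fun i j => Disjoint (T' i) (T' j) := by
      intro i j hij
      induction i using Fin.lastCases with
      | last =>
        induction j using Fin.lastCases with
        | last => exact absurd rfl hij
        | cast j' => simpa [hT'] using (hTdisj j').symm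
      | cast i' =>
        induction j using Fin.lastCases with
        | last => simpa [hT'] using hTdisj i'
        | cast j' =>
          have hne' : i' ≠ j' := fun h => hij (by rw [h])
          simpa [hT'] using hdisj hne'
    have h3 : ∀ i, f (flipSet 0 (T' i)) ≠ f 0 := by
      intro i
      induction i using Fin.lastCases with
      | last =>
        simp only [hT', Fin.snoc_last]
        rw [← hxeq, hf0]
        exact hfx
      | cast i' => simpa [hT'] using hsens i'
    have := hmax (b + 1) T' h1 h2 h3
    omega
  refine ⟨key, ?_⟩
  set E : Finset (Fin n) := Finset.univ.biUnion S with hE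
  have hcert : certAt f 0 ≤ E.card := by
    apply Nat.sInf_le
    refine ⟨E, ?_, rfl⟩
    intro y' hy'
    rw [hf0]
    apply key
    intro j ⟨i, hji⟩
    have hjE : j ∈ E := Finset.mem_biUnion.mpr ⟨i, Finset.mem_univ i, hji⟩
    simpa using hy' j hjE
  calc certAt f 0 ≤ E.card := hcert
    _ ≤ ∑ i, (S i).card := Finset.card_biUnion_le
end

section
/- For the function f : F2^3 → {0,1} given by f(x1,x2,x3) = x1 ⊕ (x2 ∨ x3), the weak parity block sensitivity satisfies wbs⊕(f) ≤ 1 < 2 ≤ wbs⊕(f|_H) where H = {x : x1 = 0} and f|_H(x2,x3) = x2 ∨ x3. Hence wbs⊕ is not monotone under restriction to cosets. -/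
/-- Block sensitivity of `g` at `y`. -/
noncomputable def bsAt {n : ℕ} (g : (Fin n → ZMod 2) → ZMod 2) (y : Fin n → ZMod 2) : ℕ :=
  sSup {k | ∃ S : Fin k → Finset (Fin n), (∀ i, (S i).Nonempty) ∧
    (Pairwise fun i j => Disjoint (S i) (S j)) ∧ ∀ i, g (flipSet y (S i)) ≠ g y}

/-- Weak parity block sensitivity of `f` at `x`. -/
noncomputable def wbsAt {n : ℕ} (f : (Fin n → ZMod 2) → ZMod 2) (x : Fin n → ZMod 2) : ℕ :=
  sInf {c | ∃ B : (Fin n → ZMod 2) ≃ₗ[ZMod 2] (Fin n → ZMod 2),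
    c = bsAt (fun z => f (B z)) (B.symm x)}

/-- Weak parity block sensitivity of `f`. -/
noncomputable def wbs {n : ℕ} (f : (Fin n → ZMod 2) → ZMod 2) : ℕ :=
  sSup (Set.range (wbsAt f))

/-- `f(x1,x2,x3) = x1 ⊕ (x2 ∨ x3)`, with OR over `F2` as `a + b + ab`. -/
def fEx : (Fin 3 → ZMod 2) → ZMod 2 :=
  fun x => x 0 + (x 1 + x 2 + x 1 * x 2)

/-- The restriction `f|_{x1 = 0}`, i.e. the OR function on two variables. -/
def orEx : (Fin 2 → ZMod 2) → ZMod 2 :=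
  fun x => x 0 + x 1 + x 0 * x 1

/-! ### Auxiliary material -/

section Aux

/-- The zero block family witnesses that `0` is always in the defining set of `bsAt`. -/
lemma bsAt_set_nonempty {n : ℕ} (g : (Fin n → ZMod 2) → ZMod 2) (y : Fin n → ZMod 2) :
    ({k | ∃ S : Fin k → Finset (Fin n), (∀ i, (S i).Nonempty) ∧
      (Pairwise fun i j => Disjoint (S i) (S j)) ∧
      ∀ i, g (flipSet y (S i)) ≠ g y} : Set ℕ).Nonempty :=
  ⟨0, Fin.elim0, fun i => i.elim0, fun i => i.elim0, fun i => i.elim0⟩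

/-- A family of pairwise disjoint nonempty subsets of `Fin n` has at most `n` members. -/
lemma blocks_le {n k : ℕ} (S : Fin k → Finset (Fin n)) (hne : ∀ i, (S i).Nonempty)
    (hdis : Pairwise fun i j => Disjoint (S i) (S j)) : k ≤ n := by
  choose a ha using hne
  have hinj : Function.Injective a := by
    intro i j hij
    by_contra h
    exact (Finset.disjoint_left.mp (hdis h)) (ha i) (hij ▸ ha j)
  simpa using Fintype.card_le_of_injective a hinj

lemma bsAt_le_n {n : ℕ} (g : (Fin n → ZMod 2) → ZMod 2) (y : Fin n → ZMod 2) :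
    bsAt g y ≤ n := by
  refine csSup_le (bsAt_set_nonempty g y) ?_
  rintro k ⟨S, h1, h2, -⟩
  exact blocks_le S h1 h2

lemma bsAt_bddAbove {n : ℕ} (g : (Fin n → ZMod 2) → ZMod 2) (y : Fin n → ZMod 2) :
    BddAbove {k | ∃ S : Fin k → Finset (Fin n), (∀ i, (S i).Nonempty) ∧
      (Pairwise fun i j => Disjoint (S i) (S j)) ∧
      ∀ i, g (flipSet y (S i)) ≠ g y} := by
  refine ⟨n, ?_⟩
  rintro k ⟨S, h1, h2, -⟩
  exact blocks_le S h1 h2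

/-- If every sensitive block (at `y`) has at least two elements, then on `Fin 3` the
block sensitivity at `y` is at most `1`. -/
lemma bsAt_le_one (g : (Fin 3 → ZMod 2) → ZMod 2) (y : Fin 3 → ZMod 2)
    (h : ∀ S : Finset (Fin 3), S.Nonempty → g (flipSet y S) ≠ g y → 2 ≤ S.card) :
    bsAt g y ≤ 1 := by
  refine csSup_le (bsAt_set_nonempty g y) ?_
  rintro k ⟨S, hne, hdis, hsens⟩
  by_contra hk
  push_neg at hk
  have hk2 : 2 ≤ k := hk
  set i0 : Fin k := ⟨0, by omega⟩
  set i1 : Fin k := ⟨1, by omega⟩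
  have hij : i0 ≠ i1 := by
    intro hc
    have : (0 : ℕ) = 1 := congrArg Fin.val hc
    omega
  have hd : Disjoint (S i0) (S i1) := hdis hij
  have h0 : 2 ≤ (S i0).card := h _ (hne i0) (hsens i0)
  have h1 : 2 ≤ (S i1).card := h _ (hne i1) (hsens i1)
  have hcard : (S i0 ∪ S i1).card = (S i0).card + (S i1).card :=
    Finset.card_union_of_disjoint hd
  have hle : (S i0 ∪ S i1).card ≤ 3 := by
    have := Finset.card_le_univ (S i0 ∪ S i1)
    simpa using this
  omega

end Aux

/-! ### The four changes of basis used for `fEx` -/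

section Bases

def m00 : (Fin 3 → ZMod 2) → (Fin 3 → ZMod 2) :=
  fun z => ![z 0 + z 1 + z 2, z 0 + z 2, z 1 + z 2]

def m00i : (Fin 3 → ZMod 2) → (Fin 3 → ZMod 2) :=
  fun z => ![z 0 + z 2, z 0 + z 1, z 0 + z 1 + z 2]

def B00 : (Fin 3 → ZMod 2) ≃ₗ[ZMod 2] (Fin 3 → ZMod 2) where
  toFun := m00
  invFun := m00i
  map_add' := by decide
  map_smul' := by decide
  left_inv := by decide
  right_inv := by decide

def m10 : (Fin 3 → ZMod 2) → (Fin 3 → ZMod 2) :=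
  fun z => ![z 1, z 1 + z 2, z 0 + z 2]

def m10i : (Fin 3 → ZMod 2) → (Fin 3 → ZMod 2) :=
  fun z => ![z 0 + z 1 + z 2, z 0, z 0 + z 1]

def B10 : (Fin 3 → ZMod 2) ≃ₗ[ZMod 2] (Fin 3 → ZMod 2) where
  toFun := m10
  invFun := m10i
  map_add' := by decide
  map_smul' := by decide
  left_inv := by decide
  right_inv := by decide

def m01 : (Fin 3 → ZMod 2) → (Fin 3 → ZMod 2) :=
  fun z => ![z 1, z 0 + z 2, z 1 + z 2]

def m01i : (Fin 3 → ZMod 2) → (Fin 3 → ZMod 2) :=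
  fun z => ![z 0 + z 1 + z 2, z 0, z 0 + z 2]

def B01 : (Fin 3 → ZMod 2) ≃ₗ[ZMod 2] (Fin 3 → ZMod 2) where
  toFun := m01
  invFun := m01i
  map_add' := by decide
  map_smul' := by decide
  left_inv := by decide
  right_inv := by decide

def m11 : (Fin 3 → ZMod 2) → (Fin 3 → ZMod 2) :=
  fun z => ![z 2, z 1 + z 2, z 0 + z 2]

def m11i : (Fin 3 → ZMod 2) → (Fin 3 → ZMod 2) :=
  fun z => ![z 0 + z 2, z 0 + z 1, z 0]

def B11 : (Fin 3 → ZMod 2) ≃ₗ[ZMod 2] (Fin 3 → ZMod 2) where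
  toFun := m11
  invFun := m11i
  map_add' := by decide
  map_smul' := by decide
  left_inv := by decide
  right_inv := by decide

lemma key00 : ∀ x : Fin 3 → ZMod 2, x 1 = 0 → x 2 = 0 →
    ∀ S : Finset (Fin 3), S.Nonempty →
      fEx (m00 (flipSet (m00i x) S)) ≠ fEx (m00 (m00i x)) → 2 ≤ S.card := by decide

lemma key10 : ∀ x : Fin 3 → ZMod 2, x 1 = 1 → x 2 = 0 →
    ∀ S : Finset (Fin 3), S.Nonempty →
      fEx (m10 (flipSet (m10i x) S)) ≠ fEx (m10 (m10i x)) → 2 ≤ S.card := by decide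

lemma key01 : ∀ x : Fin 3 → ZMod 2, x 1 = 0 → x 2 = 1 →
    ∀ S : Finset (Fin 3), S.Nonempty →
      fEx (m01 (flipSet (m01i x) S)) ≠ fEx (m01 (m01i x)) → 2 ≤ S.card := by decide

lemma key11 : ∀ x : Fin 3 → ZMod 2, x 1 = 1 → x 2 = 1 →
    ∀ S : Finset (Fin 3), S.Nonempty →
      fEx (m11 (flipSet (m11i x) S)) ≠ fEx (m11 (m11i x)) → 2 ≤ S.card := by decide

end Bases

/-! ### `wbs fEx ≤ 1` -/

lemma wbsAt_fEx_le_one (x : Fin 3 → ZMod 2) : wbsAt fEx x ≤ 1 := by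
  have hcases : ∀ a : ZMod 2, a = 0 ∨ a = 1 := by decide
  have step : ∀ B : (Fin 3 → ZMod 2) ≃ₗ[ZMod 2] (Fin 3 → ZMod 2),
      bsAt (fun z => fEx (B z)) (B.symm x) ≤ 1 → wbsAt fEx x ≤ 1 := by
    intro B hB
    exact le_trans (csInf_le (OrderBot.bddBelow _) ⟨B, rfl⟩) hB
  rcases hcases (x 1) with h1 | h1 <;> rcases hcases (x 2) with h2 | h2
  · exact step B00 (bsAt_le_one _ _ (key00 x h1 h2))
  · exact step B01 (bsAt_le_one _ _ (key01 x h1 h2))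
  · exact step B10 (bsAt_le_one _ _ (key10 x h1 h2))
  · exact step B11 (bsAt_le_one _ _ (key11 x h1 h2))

lemma wbs_fEx_le_one : wbs fEx ≤ 1 := by
  refine csSup_le ⟨wbsAt fEx 0, ⟨0, rfl⟩⟩ ?_
  rintro c ⟨x, rfl⟩
  exact wbsAt_fEx_le_one x

/-! ### `2 ≤ wbs orEx` -/

lemma orEx_ne_zero (v : Fin 2 → ZMod 2) (hv : v ≠ 0) : orEx v = 1 := by
  revert hv
  revert v
  decide

lemma two_le_bsAt_orEx (B : (Fin 2 → ZMod 2) ≃ₗ[ZMod 2] (Fin 2 → ZMod 2)) :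
    2 ≤ bsAt (fun z => orEx (B z)) (B.symm 0) := by
  have hy : B.symm (0 : Fin 2 → ZMod 2) = 0 := map_zero _
  refine le_csSup (bsAt_bddAbove (fun z => orEx (B z)) (B.symm 0)) ?_
  refine ⟨![{0}, {1}], ?_, ?_, ?_⟩
  · intro i
    fin_cases i <;> exact ⟨_, Finset.mem_singleton_self _⟩
  · intro i j hij
    fin_cases i <;> fin_cases j <;> simp_all
  · intro i
    have hflip : flipSet (B.symm 0) (![({0} : Finset (Fin 2)), {1}] i) ≠ 0 := by
      rw [hy]
      fin_cases i <;> decide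
    have hB : B (flipSet (B.symm 0) (![({0} : Finset (Fin 2)), {1}] i)) ≠ 0 := by
      intro hc
      exact hflip (by simpa using congrArg B.symm (hc.trans (map_zero B).symm))
    have h1 : orEx (B (flipSet (B.symm 0) (![({0} : Finset (Fin 2)), {1}] i))) = 1 :=
      orEx_ne_zero _ hB
    have h0 : orEx (B (B.symm 0)) = 0 := by
      rw [B.apply_symm_apply]
      decide
    simp only [h1, h0]
    decide

lemma two_le_wbsAt_orEx : 2 ≤ wbsAt orEx 0 := by
  refine le_csInf ⟨_, ⟨LinearEquiv.refl _ _, rfl⟩⟩ ?_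
  rintro c ⟨B, rfl⟩
  exact two_le_bsAt_orEx B

lemma wbsAt_orEx_le_two (x : Fin 2 → ZMod 2) : wbsAt orEx x ≤ 2 := by
  refine le_trans (csInf_le (OrderBot.bddBelow _) ⟨LinearEquiv.refl _ _, rfl⟩) ?_
  exact bsAt_le_n _ _

lemma two_le_wbs_orEx : 2 ≤ wbs orEx := by
  refine le_trans two_le_wbsAt_orEx (le_csSup ?_ ⟨0, rfl⟩)
  refine ⟨2, ?_⟩
  rintro c ⟨x, rfl⟩
  exact wbsAt_orEx_le_two x

/-- `wbs⊕(f) ≤ 1 < 2 ≤ wbs⊕(f|_H)` for `f = x1 ⊕ (x2 ∨ x3)` and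
`H = {x : x1 = 0}`, so `wbs⊕` is not monotone under restriction to cosets. -/
theorem stmt16 : wbs fEx ≤ 1 ∧ 2 ≤ wbs orEx := by
  exact ⟨wbs_fEx_le_one, two_le_wbs_orEx⟩
end

section
/- Suppose every x with f(x) = 1 is contained in some coset from a family 𝒞 of cosets of F2^n, each of codimension exactly d, on each of which f ≡ 1, and no member of 𝒞 is contained in the union of the other members. Then |𝒞| ≤ (3n)^d · 2^d. (Counting incidences: Σ_{C∈𝒞} |C| = 2^{n−d}|𝒞|, and each point lies in at most (3n)^d members of 𝒞.) -/
/-!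
The indicator of a coset `b + V` of codimension `d` in `F₂ⁿ` is `∏ᵢ (1 + φᵢ(x - b))` for a
basis `φ₁, …, φ_d` of the linear forms vanishing on `V`, so it is a polynomial of degree `≤ d`.
Irredundancy gives every member of the family a point lying in no other member; evaluating at
these points shows that the indicators are linearly independent. Hence the family is no larger
than the dimension of the space of polynomials of degree `≤ d`, which is
`∑_{k ≤ d} (n choose k) ≤ (n + 1)^d ≤ (6n)^d`.
-/

open Finset Module Submodule

theorem Finset.prod_mul_prod_eq_prod_union_of_isIdempotentElem {ι M : Type*} [CommMonoid M]
    [DecidableEq ι] {f : ι → M} (hf : ∀ i, IsIdempotentElem (f i)) (s t : Finset ι) :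
    (∏ i ∈ s, f i) * ∏ i ∈ t, f i = ∏ i ∈ s ∪ t, f i := by
  rw [← prod_union_inter, ← prod_sdiff (s₁ := s ∩ t) inter_subset_union, mul_assoc,
    ← prod_mul_distrib]
  simp only [(hf _).eq]

theorem Finset.card_filter_card_le_le_pow {α : Type*} [Fintype α] (d : ℕ) :
    #{s : Finset α | #s ≤ d} ≤ (Fintype.card α + 1) ^ d := by
  rw [card_eq_sum_card_fiberwise (f := card) (t := range (d + 1))
    fun s hs => mem_range.mpr (Nat.lt_succ_of_le (mem_filter.mp hs).2), add_pow]
  refine sum_le_sum fun k hk => ?_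
  have hkd : k ≤ d := Nat.lt_succ_iff.mp (mem_range.mp hk)
  calc #{s ∈ {s : Finset α | #s ≤ d} | #s = k} = #{s : Finset α | #s = k} := by
        rw [filter_filter]
        exact congrArg card (filter_congr fun s _ => and_iff_right_of_imp fun h => h ▸ hkd)
    _ = (Fintype.card α).choose k := by
        rw [univ_filter_card_eq, card_powersetCard, card_univ]
    _ ≤ Fintype.card α ^ k := Nat.choose_le_pow _ _
    _ ≤ Fintype.card α ^ k * 1 ^ (d - k) * d.choose k := by
        simpa using Nat.le_mul_of_pos_right _ (Nat.choose_pos hkd)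

theorem linearIndependent_indicator_of_not_subset_iUnion {ι X R : Type*} [Semiring R]
    {C : ι → Set X} (hC : ∀ i, ¬ C i ⊆ ⋃ j ≠ i, C j) :
    LinearIndependent R fun i => (C i).indicator (1 : X → R) := by
  classical
  choose p hpC hp using fun i => Set.not_subset.mp (hC i)
  have hmem : ∀ i j, p j ∈ C i ↔ j = i := fun i j =>
    ⟨fun h => by_contra fun hne => hp j (Set.mem_iUnion₂.mpr ⟨i, Ne.symm hne, h⟩),
      fun h => h ▸ hpC j⟩
  have hdiag : (LinearMap.pi (R := R) fun j => LinearMap.proj (p j)) ∘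
      (fun i => (C i).indicator 1) = fun i => Pi.single i (1 : R) := by
    funext i j
    simp [Set.indicator_apply, hmem, Pi.single_apply]
  exact LinearIndependent.of_comp _ (hdiag ▸ Pi.linearIndependent_single_one ι R)

namespace F2

variable {n : ℕ}

def monomial (S : Finset (Fin n)) : (Fin n → ZMod 2) → ZMod 2 := fun x => ∏ i ∈ S, x i

variable (n) in
def degreeLE (d : ℕ) : Submodule (ZMod 2) ((Fin n → ZMod 2) → ZMod 2) :=
  span (ZMod 2) (monomial '' {S | #S ≤ d})

theorem isIdempotentElem (a : ZMod 2) : IsIdempotentElem a := by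
  fin_cases a <;> rfl

theorem monomial_mul_monomial (S T : Finset (Fin n)) :
    monomial S * monomial T = monomial (S ∪ T) :=
  funext fun x =>
    prod_mul_prod_eq_prod_union_of_isIdempotentElem (fun i => isIdempotentElem (x i)) S T

theorem one_mem_degreeLE (d : ℕ) : 1 ∈ degreeLE n d :=
  subset_span ⟨∅, by simp, by funext; simp [monomial]⟩

theorem degreeLE_mul_le (d e : ℕ) : degreeLE n d * degreeLE n e ≤ degreeLE n (d + e) := by
  rw [degreeLE, degreeLE, span_mul_span, span_le]
  rintro _ ⟨_, ⟨S, hS, rfl⟩, _, ⟨T, hT, rfl⟩, rfl⟩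
  show monomial S * monomial T ∈ _
  rw [monomial_mul_monomial]
  exact subset_span ⟨S ∪ T, (card_union_le S T).trans (add_le_add hS hT), rfl⟩

theorem affine_mem_degreeLE_one (ℓ : (Fin n → ZMod 2) →ₗ[ZMod 2] ZMod 2) (c : ZMod 2) :
    (fun x => ℓ x + c) ∈ degreeLE n 1 := by
  have hℓ : (fun x => ℓ x + c) = ∑ j, ℓ (Pi.single j 1) • monomial {j} + c • 1 := by
    funext x
    simp only [ℓ.pi_apply_eq_sum_univ x, monomial, Pi.add_apply, Finset.sum_apply, Pi.smul_apply,
      smul_eq_mul, prod_singleton, Pi.one_apply, mul_one]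
    congr 1
    refine sum_congr rfl fun j _ => ?_
    rw [mul_comm]
    congr 2
    funext k
    simp [Pi.single_apply, eq_comm]
  rw [hℓ]
  refine add_mem (sum_mem fun j _ => smul_mem _ _ (subset_span ⟨{j}, by simp, rfl⟩))
    (smul_mem _ _ (one_mem_degreeLE 1))

theorem prod_mem_degreeLE {ι : Type*} (s : Finset ι) (f : ι → (Fin n → ZMod 2) → ZMod 2)
    (hf : ∀ i ∈ s, f i ∈ degreeLE n 1) : ∏ i ∈ s, f i ∈ degreeLE n #s := by
  classical
  induction s using Finset.induction_on with
  | empty => simpa using one_mem_degreeLE 0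
  | insert i s hi ih =>
    rw [prod_insert hi, card_insert_of_notMem hi, add_comm]
    exact degreeLE_mul_le 1 #s <| mul_mem_mul (hf i (mem_insert_self i s))
      (ih fun j hj => hf j (mem_insert_of_mem hj))

theorem prod_one_add_eq_ite {ι : Type*} (s : Finset ι) (a : ι → ZMod 2) :
    ∏ i ∈ s, (1 + a i) = if ∀ i ∈ s, a i = 0 then 1 else 0 := by
  split_ifs with h
  · exact prod_eq_one fun i hi => by simp [h i hi]
  · push Not at h
    obtain ⟨i, hi, hai⟩ := h
    refine prod_eq_zero hi ?_
    have hF2 : ∀ t : ZMod 2, t ≠ 0 → 1 + t = 0 := by decide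
    exact hF2 _ hai

theorem indicator_coset_mem_degreeLE (b : Fin n → ZMod 2)
    (V : Submodule (ZMod 2) (Fin n → ZMod 2)) :
    (coset b V).indicator 1 ∈ degreeLE n (finrank (ZMod 2) ((Fin n → ZMod 2) ⧸ V)) := by
  classical
  let B := Module.finBasis (ZMod 2) ((Fin n → ZMod 2) ⧸ V)
  let φ i : (Fin n → ZMod 2) →ₗ[ZMod 2] ZMod 2 := (B.coord i).comp V.mkQ
  have hprod : (coset b V).indicator 1 = ∏ i, fun x => φ i x + (1 - φ i b) := by
    funext x
    have hfactor : ∀ i, φ i x + (1 - φ i b) = 1 + B.coord i (V.mkQ (x - b)) := fun i => by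
      simp only [φ, LinearMap.comp_apply, map_sub]; ring
    simp only [prod_apply, hfactor, prod_one_add_eq_ite, mem_univ, true_implies,
      B.forall_coord_eq_zero_iff, mkQ_apply, Quotient.mk_eq_zero]
    rfl
  rw [hprod]
  simpa using prod_mem_degreeLE univ _ fun i _ => affine_mem_degreeLE_one (φ i) (1 - φ i b)

theorem finrank_degreeLE_le (d : ℕ) : finrank (ZMod 2) (degreeLE n d) ≤ (n + 1) ^ d := by
  classical
  have himage : monomial '' {S : Finset (Fin n) | #S ≤ d} =
      ↑((univ.filter fun S : Finset (Fin n) => #S ≤ d).image monomial) := by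
    simp
  calc finrank (ZMod 2) (degreeLE n d)
        ≤ #((univ.filter fun S : Finset (Fin n) => #S ≤ d).image monomial) := by
        rw [degreeLE, himage]; exact finrank_span_finset_le_card _
    _ ≤ #{S : Finset (Fin n) | #S ≤ d} := card_image_le
    _ ≤ (n + 1) ^ d := by simpa using card_filter_card_le_le_pow (α := Fin n) d

end F2

theorem stmt18_general {n d : ℕ} (hd : d ≤ n)
    (𝒞 : Finset (Set (Fin n → ZMod 2)))
    (hcoset : ∀ C ∈ 𝒞, ∃ (b : Fin n → ZMod 2) (V : Submodule (ZMod 2) (Fin n → ZMod 2)),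
      C = coset b V ∧ Module.finrank (ZMod 2) V = n - d)
    (hess : ∀ C ∈ 𝒞, ¬ C ⊆ {x | ∃ C' ∈ 𝒞, C' ≠ C ∧ x ∈ C'}) :
    𝒞.card ≤ (3 * n) ^ d * 2 ^ d := by
  have hdeg : ∀ C ∈ 𝒞, C.indicator 1 ∈ F2.degreeLE n d := by
    intro C hC
    obtain ⟨b, V, rfl, hV⟩ := hcoset C hC
    have hcodim := V.finrank_quotient_add_finrank
    rw [hV, finrank_fin_fun] at hcodim
    simpa [show finrank (ZMod 2) ((Fin n → ZMod 2) ⧸ V) = d by omega]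
      using F2.indicator_coset_mem_degreeLE b V
  have hli : LinearIndependent (ZMod 2)
      fun C : 𝒞 => (C : Set _).indicator (1 : (Fin n → ZMod 2) → ZMod 2) :=
    linearIndependent_indicator_of_not_subset_iUnion fun C hsub => hess C C.2 <| hsub.trans <|
      Set.iUnion₂_subset fun C' hC' _ hx => ⟨C', C'.2, Subtype.val_injective.ne hC', hx⟩
  calc 𝒞.card = finrank (ZMod 2) (span (ZMod 2) (Set.range _)) :=
        ((finrank_span_eq_card hli).trans (Fintype.card_coe 𝒞)).symm
    _ ≤ finrank (ZMod 2) (F2.degreeLE n d) :=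
        finrank_mono (span_le.mpr (Set.range_subset_iff.mpr fun C => hdeg C C.2))
    _ ≤ (n + 1) ^ d := F2.finrank_degreeLE_le d
    _ ≤ (3 * n) ^ d * 2 ^ d := by
        rw [← mul_pow]
        obtain rfl | hd0 := d.eq_zero_or_pos
        · simp
        · exact Nat.pow_le_pow_left (by omega) d

/-- if every `1`-input of `f` is covered by a family `𝒞` of cosets of
codimension exactly `d` on each of which `f ≡ 1`, and no member of `𝒞` is contained
in the union of the others, then `|𝒞| ≤ (3n)^d · 2^d`. -/
theorem stmt18 {n d : ℕ} (hd : d ≤ n) (f : (Fin n → ZMod 2) → ZMod 2)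
    (𝒞 : Finset (Set (Fin n → ZMod 2)))
    (hcoset : ∀ C ∈ 𝒞, ∃ (b : Fin n → ZMod 2) (V : Submodule (ZMod 2) (Fin n → ZMod 2)),
      C = coset b V ∧ Module.finrank (ZMod 2) V = n - d)
    (hone : ∀ C ∈ 𝒞, ∀ x ∈ C, f x = 1)
    (hcover : ∀ x, f x = 1 → ∃ C ∈ 𝒞, x ∈ C)
    (hess : ∀ C ∈ 𝒞, ¬ C ⊆ {x | ∃ C' ∈ 𝒞, C' ≠ C ∧ x ∈ C'}) :
    𝒞.card ≤ (3 * n) ^ d * 2 ^ d :=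
  stmt18_general hd 𝒞 hcoset hess
end
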